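/- arXiv:2106.07231 — 3 statements merged into one kernel-verified Lean document; each statement's English description precedes it below -/
import Mathlib

section
/- The derived subgroup G' of G is the cyclic subgroup generated by z, and it has order 4. -/
namespace MIP

/-- Relators of the group `G`. -/
def grels (n m : ℕ) : Set (FreeGroup (Fin 3)) :=
  {(FreeGroup.of 2)⁻¹ * ((FreeGroup.of 1)⁻¹ * (FreeGroup.of 0)⁻¹ * FreeGroup.of 1 * FreeGroup.of 0),
   FreeGroup.of 0 ^ (2 ^ n), FreeGroup.of 1 ^ (2 ^ m), FreeGroup.of 2 ^ 4,
   (FreeGroup.of 0)⁻¹ * FreeGroup.of 2 * FreeGroup.of 0 * FreeGroup.of 2,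
   (FreeGroup.of 1)⁻¹ * FreeGroup.of 2 * FreeGroup.of 1 * FreeGroup.of 2}

/-- Relators of the group `H`. -/
def hrels (n m : ℕ) : Set (FreeGroup (Fin 3)) :=
  {(FreeGroup.of 2)⁻¹ * ((FreeGroup.of 1)⁻¹ * (FreeGroup.of 0)⁻¹ * FreeGroup.of 1 * FreeGroup.of 0),
   FreeGroup.of 0 ^ (2 ^ n), FreeGroup.of 1 ^ (2 ^ m), FreeGroup.of 2 ^ 4,
   (FreeGroup.of 0)⁻¹ * FreeGroup.of 2 * FreeGroup.of 0 * FreeGroup.of 2,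
   (FreeGroup.of 1)⁻¹ * FreeGroup.of 2 * FreeGroup.of 1 * (FreeGroup.of 2)⁻¹}

abbrev GG (n m : ℕ) := PresentedGroup (grels n m)
abbrev HH (n m : ℕ) := PresentedGroup (hrels n m)

def gx (n m : ℕ) : GG n m := PresentedGroup.of 0
def gy (n m : ℕ) : GG n m := PresentedGroup.of 1
def gz (n m : ℕ) : GG n m := PresentedGroup.of 2
def ha (n m : ℕ) : HH n m := PresentedGroup.of 0
def hb (n m : ℕ) : HH n m := PresentedGroup.of 1
def hc (n m : ℕ) : HH n m := PresentedGroup.of 2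


/-! Conjugation by each generator sends `z` to `z` or `z⁻¹`, so `⟨z⟩` is normal, and modulo `⟨z⟩`
the relation `z = [y, x]` makes the generators commute; hence `G' = ⟨z⟩`. As `z⁴ = 1`, it remains
to see that `z` has order exactly `4`: when `n, m ≥ 1`, sending `x, y` to reflections and `z` to
`r²` defines a homomorphism onto the dihedral group of order `16`. -/

open scoped commutatorElement

section Generation

variable {G : Type*} [Group G] {S : Set G}

theorem zpowers_normal_of_closure_eq_top (hS : Subgroup.closure S = ⊤) {z : G}
    (h : ∀ s ∈ S, s⁻¹ * z * s = z ∨ s⁻¹ * z * s = z⁻¹) : (Subgroup.zpowers z).Normal := by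
  rw [← Subgroup.normalizer_eq_top_iff, eq_top_iff, ← hS, Subgroup.closure_le]
  intro s hs
  rw [SetLike.mem_coe, ← inv_mem_iff, Subgroup.mem_normalizer_iff_map_conj_eq,
    MonoidHom.map_zpowers, MonoidHom.coe_coe, MulAut.conj_apply, inv_inv]
  rcases h s hs with h | h <;> rw [h]
  exact Subgroup.zpowers_inv

theorem commutator_le_of_commute_mk (hS : Subgroup.closure S = ⊤) {N : Subgroup G} [N.Normal]
    (h : ∀ a ∈ S, ∀ b ∈ S, Commute (a : G ⧸ N) (b : G ⧸ N)) : commutator G ≤ N := by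
  rw [← Subgroup.Normal.quotient_commutative_iff_commutator_le]
  have hS' : Subgroup.closure (QuotientGroup.mk' N '' S) = ⊤ := by
    rw [← MonoidHom.map_closure, hS, ← MonoidHom.range_eq_map,
      MonoidHom.range_eq_top_of_surjective _ (QuotientGroup.mk'_surjective N)]
  have hcomm := Subgroup.isMulCommutative_closure (k := QuotientGroup.mk' N '' S) <| by
    rintro _ ⟨a, ha, rfl⟩ _ ⟨b, hb, rfl⟩
    exact h a ha b hb
  rw [hS'] at hcomm
  exact ⟨⟨fun a b ↦ congrArg Subtype.val
    (hcomm.is_comm.comm ⟨a, Subgroup.mem_top a⟩ ⟨b, Subgroup.mem_top b⟩)⟩⟩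

end Generation

section Relations

variable (n m : ℕ)

theorem closure_gx_gy_gz : Subgroup.closure {gx n m, gy n m, gz n m} = ⊤ := by
  rw [← PresentedGroup.closure_range_of]
  congr 1
  ext g
  simp [Fin.exists_fin_succ, gx, gy, gz, eq_comm]

theorem gz_eq_commutatorElement : gz n m = ⁅(gy n m)⁻¹, (gx n m)⁻¹⁆ := by
  have h := PresentedGroup.one_of_mem (rels := grels n m) (Set.mem_insert _ _)
  simp only [map_mul, map_inv] at h
  rw [commutatorElement_def, inv_inv, inv_inv]
  exact eq_of_inv_mul_eq_one h

theorem gz_pow_four : gz n m ^ 4 = 1 :=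
  PresentedGroup.one_of_mem (x := FreeGroup.of 2 ^ 4) (by simp [grels])

theorem gx_inv_mul_gz_mul_gx : (gx n m)⁻¹ * gz n m * gx n m = (gz n m)⁻¹ :=
  eq_inv_of_mul_eq_one_left <| PresentedGroup.one_of_mem
    (x := (FreeGroup.of 0)⁻¹ * FreeGroup.of 2 * FreeGroup.of 0 * FreeGroup.of 2) (by simp [grels])

theorem gy_inv_mul_gz_mul_gy : (gy n m)⁻¹ * gz n m * gy n m = (gz n m)⁻¹ :=
  eq_inv_of_mul_eq_one_left <| PresentedGroup.one_of_mem
    (x := (FreeGroup.of 1)⁻¹ * FreeGroup.of 2 * FreeGroup.of 1 * FreeGroup.of 2) (by simp [grels])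

end Relations

section DihedralModel

open DihedralGroup

def dihedralImage : Fin 3 → DihedralGroup 8 := ![sr 1, sr 0, r 2]

theorem dihedralImage_rels {n m : ℕ} (hn : n ≠ 0) (hm : m ≠ 0) :
    ∀ w ∈ grels n m, FreeGroup.lift dihedralImage w = 1 := by
  have sr_pow_two_pow {k : ℕ} (i : ZMod 8) (hk : k ≠ 0) : sr i ^ 2 ^ k = 1 :=
    orderOf_dvd_iff_pow_eq_one.mp (by rw [orderOf_sr]; exact dvd_pow_self 2 hk)
  simp only [grels, Set.forall_mem_insert, Set.mem_singleton_iff, forall_eq, map_mul, map_inv,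
    map_pow, FreeGroup.lift_apply_of]
  exact ⟨by decide, sr_pow_two_pow _ hn, sr_pow_two_pow _ hm, by decide, by decide, by decide⟩

theorem orderOf_gz {n m : ℕ} (hn : n ≠ 0) (hm : m ≠ 0) : orderOf (gz n m) = 4 := by
  refine Nat.dvd_antisymm (orderOf_dvd_of_pow_eq_one (gz_pow_four n m)) ?_
  have h := orderOf_map_dvd (PresentedGroup.toGroup (dihedralImage_rels hn hm)) (gz n m)
  rwa [gz, PresentedGroup.toGroup.of, dihedralImage, Matrix.cons_val_two, Matrix.tail_cons,
    Matrix.head_cons, orderOf_r] at h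

end DihedralModel

theorem commutator_eq_zpowers_gz (n m : ℕ) :
    commutator (GG n m) = Subgroup.zpowers (gz n m) := by
  have := zpowers_normal_of_closure_eq_top (closure_gx_gy_gz n m) (z := gz n m)
    (by simp [gx_inv_mul_gz_mul_gx, gy_inv_mul_gz_mul_gy])
  refine le_antisymm (commutator_le_of_commute_mk (closure_gx_gy_gz n m) ?_) ?_
  · have hz : (gz n m : GG n m ⧸ Subgroup.zpowers (gz n m)) = 1 :=
      (QuotientGroup.eq_one_iff _).mpr (Subgroup.mem_zpowers _)
    have hxy : Commute (gx n m : GG n m ⧸ Subgroup.zpowers (gz n m)) (gy n m) := by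
      have h := congrArg (QuotientGroup.mk' (Subgroup.zpowers (gz n m)))
        (gz_eq_commutatorElement n m)
      rw [map_commutatorElement, map_inv, map_inv, QuotientGroup.mk'_apply, hz, eq_comm,
        commutatorElement_eq_one_iff_commute, Commute.inv_inv_iff] at h
      exact h.symm
    simp [hz, hxy, hxy.symm]
  · rw [Subgroup.zpowers_le, gz_eq_commutatorElement, commutator_def]
    exact Subgroup.commutator_mem_commutator (Subgroup.mem_top _) (Subgroup.mem_top _)

/-- The derived subgroup `G'` of `G` is the cyclic subgroup generated by
`z`, and it has order 4. -/
theorem statement_3 (n m : ℕ) (hm : 2 < m) (hmn : m < n) :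
    commutator (GG n m) = Subgroup.zpowers (gz n m) ∧
    Nat.card (commutator (GG n m)) = 4 := by
  refine ⟨commutator_eq_zpowers_gz n m, ?_⟩
  rw [commutator_eq_zpowers_gz, Nat.card_zpowers, orderOf_gz (by omega) (by omega)]

end MIP
end

section
/- The centralizer C_H(H') of the derived subgroup H' in H equals the subgroup generated by c, a² and b, and this subgroup is abelian. -/
/-!
The relation `c = [b, a]` puts `c` in `H'`, and `⟨c⟩` is normal (`a` inverts `c`, `b` centralizes
it) with `H / ⟨c⟩` generated by the commuting images of `a` and `b`; so `H' = ⟨c⟩` and `C_H(H')` is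
the centralizer of `c`. The generators of `K = ⟨c, a², b⟩` commute pairwise, and since `a² ∈ K` and
`a` conjugates `b` and `c` into `K`, every element of `H` lies in `K` or in `aK`. An element `ak`
with `k ∈ K` centralizing `c` would make `a` centralize `c`, i.e. `c² = 1`; but `c` has order 4,
as `H` maps onto the dihedral group of order 16 with `c` sent to a rotation of order 4.
-/

namespace MIP

open Subgroup
open scoped commutatorElement

section General

variable {G : Type*} [Group G]

theorem zpowers_normal_of_closure_eq_top_s7 {S : Set G} (hS : closure S = ⊤) {c : G}
    (hconj : ∀ s ∈ S, SemiconjBy s c c ∨ SemiconjBy s c c⁻¹) : (zpowers c).Normal := by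
  rw [← normalizer_eq_top_iff, eq_top_iff, ← hS, closure_le]
  intro s hs
  rw [SetLike.mem_coe, mem_normalizer_iff_map_conj_eq, MonoidHom.map_zpowers, MonoidHom.coe_coe,
    MulAut.conj_apply]
  rcases hconj s hs with h | h <;> rw [mul_inv_eq_of_eq_mul h.eq]
  exact zpowers_inv

theorem commutator_le_of_closure_eq_top {S : Set G} (hS : closure S = ⊤) {N : Subgroup G}
    [N.Normal] (hcomm : ∀ x ∈ S, ∀ y ∈ S, ⁅x, y⁆ ∈ N) : commutator G ≤ N := by
  rw [← Normal.quotient_commutative_iff_commutator_le]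
  let T := QuotientGroup.mk' N '' S
  have hT : closure T = ⊤ := by
    rw [← MonoidHom.map_closure, hS, ← MonoidHom.range_eq_map, MonoidHom.range_eq_top]
    exact QuotientGroup.mk'_surjective N
  have hTcomm : IsMulCommutative (closure T) := isMulCommutative_closure <| by
    rintro _ ⟨x, hx, rfl⟩ _ ⟨y, hy, rfl⟩
    rw [← commutatorElement_eq_one_iff_mul_comm, ← map_commutatorElement, QuotientGroup.mk'_apply,
      QuotientGroup.eq_one_iff]
    exact hcomm x hx y hy
  exact ⟨⟨fun x y => setLike_mul_comm (hT ▸ mem_top x : x ∈ closure T) (hT ▸ mem_top y)⟩⟩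

theorem mem_or_inv_mul_mem_of_closure_insert_eq_top {a : G} {S : Set G}
    (hS : closure (insert a S) = ⊤) {K : Subgroup G} (hSK : S ⊆ K) (ha_sq : a ^ 2 ∈ K)
    (hconj : ∀ s ∈ S, a⁻¹ * s * a ∈ K) (g : G) : g ∈ K ∨ a⁻¹ * g ∈ K := by
  have hg : g ∈ closure (insert a S) := hS ▸ mem_top g
  induction hg using closure_induction_left with
  | one => exact .inl K.one_mem
  | mul_left x hx y _ ih =>
    rcases hx with rfl | hx <;> rcases ih with hy | hy
    · exact .inr (by rwa [inv_mul_cancel_left])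
    · exact .inl (by simpa [pow_two, mul_assoc] using K.mul_mem ha_sq hy)
    · exact .inl (K.mul_mem (hSK hx) hy)
    · exact .inr (by simpa [mul_assoc] using K.mul_mem (hconj x hx) hy)
  | inv_mul_cancel x hx y _ ih =>
    rcases hx with rfl | hx <;> rcases ih with hy | hy
    · exact .inr (by simpa [pow_two, mul_assoc] using K.mul_mem (K.inv_mem ha_sq) hy)
    · exact .inl hy
    · exact .inl (K.mul_mem (K.inv_mem (hSK hx)) hy)
    · exact .inr (by simpa [mul_assoc] using K.mul_mem (K.inv_mem (hconj x hx)) hy)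

end General

section Presentation

variable (n m : ℕ)

local notation "a" => ha n m
local notation "b" => hb n m
local notation "c" => hc n m

theorem hc_eq_commutator : c = b⁻¹ * a⁻¹ * b * a :=
  PresentedGroup.mk_eq_mk_of_inv_mul_mem (by simp [hrels])

theorem inv_ha_mul_hc_mul_ha : a⁻¹ * c * a = c⁻¹ :=
  PresentedGroup.mk_eq_mk_of_mul_inv_mem (by simp [hrels])

theorem inv_hb_mul_hc_mul_hb : b⁻¹ * c * b = c :=
  PresentedGroup.mk_eq_mk_of_mul_inv_mem (by simp [hrels])

theorem semiconjBy_ha_hc_inv : SemiconjBy a c⁻¹ c := by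
  rw [SemiconjBy, ← inv_ha_mul_hc_mul_ha]; group

theorem semiconjBy_ha_hc : SemiconjBy a c c⁻¹ := by
  simpa using (semiconjBy_ha_hc_inv n m).inv_right

theorem semiconjBy_ha_hb_mul_hc : SemiconjBy a (b * c) b := by
  rw [SemiconjBy, hc_eq_commutator]; group

theorem semiconjBy_ha_hb : SemiconjBy a b (b * c) := by
  simpa using (semiconjBy_ha_hb_mul_hc n m).mul_right (semiconjBy_ha_hc_inv n m)

theorem commute_hb_hc : Commute b c := by
  rw [commute_iff_eq]
  conv_lhs => rw [← inv_hb_mul_hc_mul_hb]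
  group

theorem commute_ha_sq_hc : Commute (a ^ 2) c :=
  pow_two a ▸ (semiconjBy_ha_hc_inv n m).mul_left (semiconjBy_ha_hc n m)

theorem commute_ha_sq_hb : Commute (a ^ 2) b :=
  pow_two a ▸ (semiconjBy_ha_hb_mul_hc n m).mul_left (semiconjBy_ha_hb n m)

theorem commutatorElement_ha_hb : ⁅a, b⁆ = c := by
  rw [commutatorElement_def, (semiconjBy_ha_hb n m).eq, mul_inv_cancel_right,
    (commute_hb_hc n m).eq, mul_inv_cancel_right]

theorem closure_generators_eq_top : closure {a, b, c} = ⊤ := by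
  rw [← PresentedGroup.closure_range_of]
  congr 1
  ext x
  simp [Fin.exists_fin_succ, ha, hb, hc, eq_comm]

theorem zpowers_hc_normal : (zpowers c).Normal := by
  refine zpowers_normal_of_closure_eq_top_s7 (closure_generators_eq_top n m) ?_
  rintro s (rfl | rfl | rfl)
  · exact .inr (semiconjBy_ha_hc n m)
  · exact .inl (commute_hb_hc n m)
  · exact .inl (Commute.refl c)

theorem commutator_le_zpowers_hc : commutator (HH n m) ≤ zpowers c := by
  have := zpowers_hc_normal n m
  have h_left (y : HH n m) : ⁅c, y⁆ ∈ zpowers c :=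
    commutator_le_left _ ⊤ (commutator_mem_commutator (mem_zpowers c) (mem_top y))
  have h_right (x : HH n m) : ⁅x, c⁆ ∈ zpowers c :=
    commutator_le_right ⊤ _ (commutator_mem_commutator (mem_top x) (mem_zpowers c))
  have hba : ⁅b, a⁆ = c⁻¹ := by rw [← commutatorElement_inv, commutatorElement_ha_hb]
  refine commutator_le_of_closure_eq_top (closure_generators_eq_top n m) ?_
  rintro x (rfl | rfl | rfl) y (rfl | rfl | rfl) <;>
    simp [h_left, h_right, hba, commutatorElement_ha_hb, mem_zpowers]

theorem hc_mem_commutator : c ∈ commutator (HH n m) := by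
  rw [← commutatorElement_ha_hb, commutator_def]
  exact commutator_mem_commutator (mem_top a) (mem_top b)

theorem isMulCommutative_closure_hc_ha_sq_hb : IsMulCommutative (closure {c, a ^ 2, b}) := by
  refine isMulCommutative_closure ?_
  rintro x (rfl | rfl | rfl) y (rfl | rfl | rfl) <;>
    first
    | rfl
    | exact (commute_ha_sq_hc n m).eq | exact (commute_ha_sq_hc n m).symm.eq
    | exact (commute_ha_sq_hb n m).eq | exact (commute_ha_sq_hb n m).symm.eq
    | exact (commute_hb_hc n m).eq | exact (commute_hb_hc n m).symm.eq

theorem mem_closure_or_inv_ha_mul_mem (g : HH n m) :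
    g ∈ closure {c, a ^ 2, b} ∨ a⁻¹ * g ∈ closure {c, a ^ 2, b} := by
  refine mem_or_inv_mul_mem_of_closure_insert_eq_top (closure_generators_eq_top n m) ?_
    (subset_closure (by simp)) ?_ g
  · rintro x (rfl | rfl) <;> exact subset_closure (by simp)
  · rintro s (rfl | rfl)
    · rw [mul_assoc, ← (semiconjBy_ha_hb_mul_hc n m).eq, inv_mul_cancel_left]
      exact mul_mem (subset_closure (by simp)) (subset_closure (by simp))
    · rw [inv_ha_mul_hc_mul_ha]
      exact inv_mem (subset_closure (by simp))

end Presentation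

open DihedralGroup in
theorem hc_sq_ne_one {n m : ℕ} (hn : n ≠ 0) (hm : 3 ≤ m) : hc n m ^ 2 ≠ 1 := by
  have ha_pow : (sr 0 : DihedralGroup 8) ^ 2 ^ n = 1 :=
    orderOf_dvd_iff_pow_eq_one.mp ((orderOf_sr (n := 8) 0).symm ▸ dvd_pow_self 2 hn)
  have hb_pow : (r (-1) : DihedralGroup 8) ^ 2 ^ m = 1 :=
    orderOf_dvd_iff_pow_eq_one.mp
      ((orderOf_dvd_of_pow_eq_one (by decide : (r (-1) : DihedralGroup 8) ^ 2 ^ 3 = 1)).trans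
        (pow_dvd_pow 2 hm))
  have hrels_dihedral : ∀ w ∈ hrels n m,
      FreeGroup.lift (![sr 0, r (-1), r 2] : Fin 3 → DihedralGroup 8) w = 1 := by
    simp only [hrels, Set.mem_insert_iff, Set.mem_singleton_iff, forall_eq_or_imp, forall_eq,
      map_mul, map_inv, map_pow, FreeGroup.lift_apply_of]
    exact ⟨by decide, ha_pow, hb_pow, by decide, by decide, by decide⟩
  intro h
  have := congrArg (PresentedGroup.toGroup hrels_dihedral) h
  rw [map_pow, hc, PresentedGroup.toGroup.of, map_one] at this
  exact absurd this (by decide)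

theorem not_commute_ha_hc {n m : ℕ} (hn : n ≠ 0) (hm : 3 ≤ m) : ¬Commute (ha n m) (hc n m) := by
  intro h
  have hc_eq_inv : hc n m = (hc n m)⁻¹ :=
    mul_right_cancel (h.eq.symm.trans (semiconjBy_ha_hc n m).eq)
  exact hc_sq_ne_one hn hm (by rw [pow_two, mul_eq_one_iff_eq_inv, ← hc_eq_inv])

/-- The centralizer `C_H(H')` of the derived subgroup `H'` in `H` equals
the subgroup generated by `c`, `a²` and `b`, and this subgroup is abelian. -/
theorem statement_7 (n m : ℕ) (hm : 2 < m) (hmn : m < n) :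
    Subgroup.centralizer (commutator (HH n m) : Set (HH n m)) =
      Subgroup.closure {hc n m, ha n m ^ 2, hb n m} ∧
    IsMulCommutative (Subgroup.closure {hc n m, ha n m ^ 2, hb n m}) := by
  set K := closure {hc n m, ha n m ^ 2, hb n m}
  have hK : IsMulCommutative K := isMulCommutative_closure_hc_ha_sq_hb n m
  have hcK : hc n m ∈ K := subset_closure (by simp)
  refine ⟨le_antisymm (fun x hx => ?_) ?_, hK⟩
  · refine (mem_closure_or_inv_ha_mul_mem n m x).resolve_right fun hk => ?_
    have hxc : Commute x (hc n m) := (mem_centralizer_iff.mp hx _ (hc_mem_commutator n m)).symm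
    have hkc : Commute ((ha n m)⁻¹ * x) (hc n m) := setLike_mul_comm hk hcK
    refine not_commute_ha_hc (n := n) (m := m) (by omega) (by omega) ?_
    simpa using hxc.mul_left hkc.inv_left
  · calc K ≤ centralizer K := le_centralizer K
      _ ≤ centralizer (commutator (HH n m)) :=
        centralizer_le ((commutator_le_zpowers_hc n m).trans (zpowers_le.mpr hcK))

end MIP
end

section
/- In the group algebra kH over the field with 2 elements, the augmentation ideal I is generated as a (non-unital) ring by the two elements a + 1 and ỹ + 1, where ỹ = b(a + b + ab)c. -/
namespace MIP

/-- The group algebra of `H` over the field with 2 elements. -/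
abbrev kH (n m : ℕ) := MonoidAlgebra (ZMod 2) (HH n m)

/-- The embedding of `H` into its group algebra over `𝔽₂`. -/
noncomputable def e (n m : ℕ) : HH n m →* kH n m := MonoidAlgebra.of (ZMod 2) (HH n m)

/-- The augmentation map `kH → k`, the `k`-algebra map sending every element of `H` to 1. -/
noncomputable def aug (n m : ℕ) : kH n m →ₐ[ZMod 2] ZMod 2 :=
  MonoidAlgebra.lift (ZMod 2) (ZMod 2) (HH n m) 1

/-- The augmentation ideal `I` of `kH`, as a `k`-submodule (it is a two-sided ideal). -/
noncomputable def augIdeal (n m : ℕ) : Submodule (ZMod 2) (kH n m) :=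
  LinearMap.ker (aug n m).toLinearMap

/-- The element `ỹ = b(a+b+ab)c` of `kH`. -/
noncomputable def yt (n m : ℕ) : kH n m :=
  e n m (hb n m) * (e n m (ha n m) + e n m (hb n m) + e n m (ha n m * hb n m)) *
    e n m (hc n m)


/-!
Write `u g = g - 1`, which is `g + 1` in characteristic 2. The augmentation ideal `I` is spanned
by the `u g`, and `u (g h) = u g * u h + u g + u h`, so modulo `I²` it is generated by `u a` and
`u b`. As `c` is a commutator, `u c ∈ I²`, and `ỹ + 1 = u b + b (u c + u a u b c)`; hence
`I ≤ J + I²` for the ring `J` generated by `a + 1` and `ỹ + 1`. Iterating, `I ≤ J + Iᵏ` for all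
`k`, so it suffices that `I` is nilpotent.

For nilpotency, go down the series `H ⊵ ⟨⟨b⟩⟩ ⊵ ⟨⟨c⟩⟩ ⊵ ⟨⟨c²⟩⟩ ⊵ 1`: the elements `a, b, c, c²`
are central modulo the next term, with a power `g ^ 2 ^ j` in it. If `z` is central modulo a
two-sided ideal `A` and `z ^ q ∈ A`, then `(A + (z)) ^ q ≤ A`; with `z = u g` and the two-sided
ideals generated by the next `u x`, this gives `I ^ (2 ^ n * 2 ^ m * 4) = 0`.
-/

open scoped commutatorElement

section TwoSidedSpan

variable (k : Type*) {R : Type*} [CommRing k] [Ring R] [Algebra k R]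

def twoSidedSpan (s : Set R) : Submodule k R := ⊤ * Submodule.span k s * ⊤

variable {k}

lemma subset_twoSidedSpan (s : Set R) : s ⊆ twoSidedSpan k s := fun x hx => by
  have := Submodule.mul_mem_mul (Submodule.mul_mem_mul (Submodule.mem_top (R := k) (x := 1))
    (Submodule.subset_span hx)) (Submodule.mem_top (R := k) (x := (1 : R)))
  rwa [one_mul, mul_one] at this

lemma top_mul_twoSidedSpan_le (s : Set R) : ⊤ * twoSidedSpan k s ≤ twoSidedSpan k s :=
  calc ⊤ * twoSidedSpan k s = ⊤ * ⊤ * Submodule.span k s * ⊤ := by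
        simp only [twoSidedSpan, mul_assoc]
    _ ≤ twoSidedSpan k s := mul_le_mul' (mul_le_mul' le_top le_rfl) le_rfl

lemma twoSidedSpan_mul_top_le (s : Set R) : twoSidedSpan k s * ⊤ ≤ twoSidedSpan k s :=
  calc twoSidedSpan k s * ⊤ = ⊤ * Submodule.span k s * (⊤ * ⊤) := by
        simp only [twoSidedSpan, mul_assoc]
    _ ≤ twoSidedSpan k s := mul_le_mul' le_rfl le_top

lemma twoSidedSpan_le {s : Set R} {A : Submodule k R} (hl : ⊤ * A ≤ A) (hr : A * ⊤ ≤ A)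
    (hs : s ⊆ A) : twoSidedSpan k s ≤ A :=
  calc twoSidedSpan k s ≤ ⊤ * A * ⊤ :=
        mul_le_mul' (mul_le_mul' le_rfl (Submodule.span_le.2 hs)) le_rfl
    _ ≤ A := (mul_le_mul' hl le_rfl).trans hr

lemma sup_pow_le {A B : Submodule k R} (hl : ⊤ * A ≤ A) (hr : A * ⊤ ≤ A) :
    ∀ q : ℕ, (A ⊔ B) ^ q ≤ A ⊔ B ^ q
  | 0 => le_sup_right
  | q + 1 => by
    have hAX (X : Submodule k R) : A * X ≤ A := (mul_le_mul' le_rfl le_top).trans hr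
    have hXA (X : Submodule k R) : X * A ≤ A := (mul_le_mul' le_top le_rfl).trans hl
    calc (A ⊔ B) ^ (q + 1) = (A ⊔ B) ^ q * (A ⊔ B) := pow_succ _ _
      _ ≤ (A ⊔ B ^ q) * (A ⊔ B) := mul_le_mul' (sup_pow_le hl hr q) le_rfl
      _ = A * A ⊔ A * B ⊔ (B ^ q * A ⊔ B ^ q * B) := by
        rw [Submodule.sup_mul, Submodule.mul_sup, Submodule.mul_sup]
      _ ≤ A ⊔ B ^ (q + 1) := by
        rw [← pow_succ]
        exact sup_le (le_sup_of_le_left (sup_le (hAX _) (hAX _))) (sup_le_sup (hXA _) le_rfl)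

lemma top_mul_span_singleton_le {A : Submodule k R} {z : R} (hz : ∀ r, r * z - z * r ∈ A) :
    ⊤ * Submodule.span k {z} ≤ Submodule.span k {z} * ⊤ ⊔ A := by
  refine Submodule.mul_le.2 fun r _ y hy => ?_
  obtain ⟨c, rfl⟩ := Submodule.mem_span_singleton.1 hy
  rw [mul_smul_comm, ← sub_add_cancel (r * z) (z * r)]
  exact Submodule.smul_mem _ _ (add_mem (Submodule.mem_sup_right (hz r))
    (Submodule.mem_sup_left (Submodule.mul_mem_mul (Submodule.mem_span_singleton_self z)
      Submodule.mem_top)))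

lemma twoSidedSpan_singleton_pow_le {A : Submodule k R} (hl : ⊤ * A ≤ A) (hr : A * ⊤ ≤ A)
    {z : R} (hz : ∀ r, r * z - z * r ∈ A) :
    ∀ q : ℕ, twoSidedSpan k {z} ^ q ≤ A ⊔ twoSidedSpan k {z ^ q}
  | 0 => le_sup_of_le_right <| by
    rw [pow_zero, pow_zero, Submodule.one_le]
    exact subset_twoSidedSpan _ rfl
  | q + 1 => by
    set S := Submodule.span k {z}
    set Sq := Submodule.span k {z ^ q}
    have hcomm : ⊤ * ⊤ * S ≤ S * ⊤ ⊔ A :=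
      (mul_le_mul' le_top le_rfl).trans (top_mul_span_singleton_le hz)
    have hSqS : Sq * S = Submodule.span k {z ^ (q + 1)} := by
      rw [Submodule.span_mul_span, Set.singleton_mul_singleton, ← pow_succ]
    calc twoSidedSpan k {z} ^ (q + 1) = twoSidedSpan k {z} ^ q * twoSidedSpan k {z} :=
          pow_succ _ _
      _ ≤ (A ⊔ twoSidedSpan k {z ^ q}) * twoSidedSpan k {z} :=
          mul_le_mul' (twoSidedSpan_singleton_pow_le hl hr hz q) le_rfl
      _ = A * twoSidedSpan k {z} ⊔ ⊤ * Sq * (⊤ * ⊤ * S) * ⊤ := by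
          simp only [Submodule.sup_mul, twoSidedSpan, mul_assoc, S, Sq]
      _ ≤ A ⊔ ⊤ * Sq * (S * ⊤ ⊔ A) * ⊤ :=
          sup_le_sup ((mul_le_mul' le_rfl le_top).trans hr)
            (mul_le_mul' (mul_le_mul' le_rfl hcomm) le_rfl)
      _ = A ⊔ (twoSidedSpan k {z ^ (q + 1)} * ⊤ ⊔ (⊤ * Sq) * A * ⊤) := by
          simp only [Submodule.mul_sup, Submodule.sup_mul, twoSidedSpan, ← hSqS, mul_assoc]
      _ ≤ A ⊔ (twoSidedSpan k {z ^ (q + 1)} ⊔ ⊤ * A * ⊤) :=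
          sup_le_sup_left (sup_le_sup (twoSidedSpan_mul_top_le _)
            (mul_le_mul' (mul_le_mul' le_top le_rfl) le_rfl)) _
      _ ≤ A ⊔ twoSidedSpan k {z ^ (q + 1)} := by
          rw [sup_comm (twoSidedSpan k _), ← sup_assoc,
            sup_eq_left.2 ((mul_le_mul' hl le_rfl).trans hr)]

lemma pow_mul_le_of_le_sup_twoSidedSpan {I A : Submodule k R} (hl : ⊤ * A ≤ A)
    (hr : A * ⊤ ≤ A) {z : R} (hz : ∀ r, r * z - z * r ∈ A) {q : ℕ} (hzq : z ^ q ∈ A) {s : ℕ}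
    (hs : I ^ s ≤ A ⊔ twoSidedSpan k {z}) : I ^ (s * q) ≤ A :=
  calc I ^ (s * q) ≤ (A ⊔ twoSidedSpan k {z}) ^ q := by
        rw [pow_mul]; exact pow_le_pow_left' hs q
    _ ≤ A ⊔ (A ⊔ twoSidedSpan k {z ^ q}) :=
        (sup_pow_le hl hr q).trans (sup_le_sup_left (twoSidedSpan_singleton_pow_le hl hr hz q) _)
    _ ≤ A := by
      simpa using twoSidedSpan_le hl hr (Set.singleton_subset_iff.2 hzq)

lemma le_of_le_sup_mul_self {I J : Submodule k R} (hJ : J * J ≤ J) (hJI : J ≤ I)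
    (hI : ⊤ * I ≤ I) (hIJ : I ≤ J ⊔ I * I) (hnil : IsNilpotent I) : I ≤ J := by
  have key (q : ℕ) : I ≤ J ⊔ I ^ (q + 1) := by
    induction q with
    | zero => simp
    | succ q ih =>
      have hpow : I ^ (q + 1) ≤ I := (mul_le_mul' le_top le_rfl).trans hI
      calc I ≤ J ⊔ (J ⊔ I ^ (q + 1)) * (J ⊔ I ^ (q + 1)) :=
            hIJ.trans (sup_le_sup_left (mul_le_mul' ih ih) _)
        _ = J ⊔ (J * J ⊔ J * I ^ (q + 1) ⊔ (I ^ (q + 1) * J ⊔ I ^ (q + 1) * I ^ (q + 1))) := by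
          rw [Submodule.sup_mul, Submodule.mul_sup, Submodule.mul_sup]
        _ ≤ J ⊔ (J ⊔ I * I ^ (q + 1) ⊔ (I ^ (q + 1) * I ⊔ I ^ (q + 1) * I)) := by
          gcongr
        _ = J ⊔ I ^ (q + 2) := by
          rw [← pow_succ, ← pow_succ']
          simp
  obtain ⟨q, hq⟩ := hnil
  simpa [pow_succ, hq] using key q

end TwoSidedSpan

section GroupAlgebra

open MonoidAlgebra

variable (k G : Type*) [CommRing k] [Group G]

-- `augIdeal n m` is `augmentationIdeal (ZMod 2) (HH n m)` by definition.
noncomputable def augmentationIdeal : Submodule k (MonoidAlgebra k G) :=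
  LinearMap.ker (lift k k G 1).toLinearMap

variable {k G}

lemma mem_augmentationIdeal {x : MonoidAlgebra k G} :
    x ∈ augmentationIdeal k G ↔ lift k k G 1 x = 0 := Iff.rfl

lemma of_sub_one_mem_augmentationIdeal (g : G) : of k G g - 1 ∈ augmentationIdeal k G := by
  simp [mem_augmentationIdeal]

lemma top_mul_augmentationIdeal_le : ⊤ * augmentationIdeal k G ≤ augmentationIdeal k G :=
  Submodule.mul_le.2 fun _ _ _ hx => by
    rw [mem_augmentationIdeal] at hx ⊢
    rw [map_mul, hx, mul_zero]

lemma augmentationIdeal_mul_top_le : augmentationIdeal k G * ⊤ ≤ augmentationIdeal k G :=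
  Submodule.mul_le.2 fun _ hx _ _ => by
    rw [mem_augmentationIdeal] at hx ⊢
    rw [map_mul, hx, zero_mul]

lemma augmentationIdeal_mul_self_le :
    augmentationIdeal k G * augmentationIdeal k G ≤ augmentationIdeal k G :=
  (mul_le_mul' le_rfl le_top).trans augmentationIdeal_mul_top_le

lemma augmentationIdeal_le_span :
    augmentationIdeal k G ≤ Submodule.span k (Set.range fun g : G => of k G g - 1) := by
  intro x hx
  have key (y : MonoidAlgebra k G) :
      y - lift k k G 1 y • 1 ∈ Submodule.span k (Set.range fun g : G => of k G g - 1) := by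
    induction y using MonoidAlgebra.induction_on with
    | of g => simpa using Submodule.subset_span (R := k) (Set.mem_range_self
        (f := fun g : G => of k G g - 1) g)
    | add y z hy hz => simpa [add_smul, add_sub_add_comm] using add_mem hy hz
    | smul c y hy => simpa [smul_sub, smul_smul] using Submodule.smul_mem _ c hy
  simpa [mem_augmentationIdeal.1 hx] using key x

lemma sub_one_mem_of_mem_closure {M : Submodule k (MonoidAlgebra k G)}
    (hM : augmentationIdeal k G * M ≤ M) {s : Set G} (hs : ∀ g ∈ s, of k G g - 1 ∈ M) {g : G}
    (hg : g ∈ Subgroup.closure s) : of k G g - 1 ∈ M := by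
  have hmul {x : G} {y : MonoidAlgebra k G} (hy : y ∈ M) : (of k G x - 1) * y ∈ M :=
    hM (Submodule.mul_mem_mul (of_sub_one_mem_augmentationIdeal x) hy)
  induction hg using Subgroup.closure_induction with
  | mem x hx => exact hs x hx
  | one => rw [map_one, sub_self]; exact zero_mem _
  | mul x y _ _ hx hy =>
    have : of k G (x * y) - 1 = (of k G x - 1) * (of k G y - 1) + (of k G x - 1) +
        (of k G y - 1) := by
      rw [map_mul]; noncomm_ring
    rw [this]
    exact add_mem (add_mem (hmul hy) hx) hy
  | inv x _ hx =>
    have hinv : of k G x⁻¹ * of k G x = 1 := by rw [← map_mul, inv_mul_cancel, map_one]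
    have : of k G x⁻¹ - 1 = -((of k G x⁻¹ - 1) * (of k G x - 1)) - (of k G x - 1) := by
      simp only [sub_mul, mul_sub, hinv, mul_one, one_mul]; abel
    rw [this]
    exact sub_mem (neg_mem (hmul hx)) hx

lemma augmentationIdeal_le_of_closure_eq_top {M : Submodule k (MonoidAlgebra k G)}
    (hM : augmentationIdeal k G * M ≤ M) {s : Set G} (hs : ∀ g ∈ s, of k G g - 1 ∈ M)
    (htop : Subgroup.closure s = ⊤) : augmentationIdeal k G ≤ M := by
  refine augmentationIdeal_le_span.trans (Submodule.span_le.2 ?_)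
  rintro _ ⟨g, rfl⟩
  exact sub_one_mem_of_mem_closure hM hs (htop ▸ Subgroup.mem_top g)

lemma sub_one_mem_of_mem_normalClosure {A : Submodule k (MonoidAlgebra k G)}
    (hl : ⊤ * A ≤ A) (hr : A * ⊤ ≤ A) {s : Set G} (hs : ∀ g ∈ s, of k G g - 1 ∈ A) {g : G}
    (hg : g ∈ Subgroup.normalClosure s) : of k G g - 1 ∈ A := by
  refine sub_one_mem_of_mem_closure ((mul_le_mul' le_top le_rfl).trans hl) ?_ hg
  intro x hx
  obtain ⟨y, hy, hc⟩ := Group.mem_conjugatesOfSet_iff.1 hx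
  obtain ⟨h, rfl⟩ := isConj_iff.1 hc
  have : of k G (h * y * h⁻¹) - 1 = of k G h * (of k G y - 1) * of k G h⁻¹ := by
    rw [mul_sub, sub_mul, mul_one, ← map_mul, ← map_mul, ← map_mul, mul_inv_cancel, map_one]
  rw [this]
  exact hr (Submodule.mul_mem_mul (hl (Submodule.mul_mem_mul Submodule.mem_top (hs y hy)))
    Submodule.mem_top)

lemma mul_sub_mul_mem_of_commutator_mem {A : Submodule k (MonoidAlgebra k G)} (hr : A * ⊤ ≤ A)
    {g : G} (hg : ∀ h : G, of k G ⁅h, g⁆ - 1 ∈ A) (r : MonoidAlgebra k G) :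
    r * (of k G g - 1) - (of k G g - 1) * r ∈ A := by
  induction r using MonoidAlgebra.induction_on with
  | of h =>
    have : (of k G ⁅h, g⁆ - 1) * of k G (g * h) =
        of k G h * (of k G g - 1) - (of k G g - 1) * of k G h := by
      rw [sub_mul, one_mul, ← map_mul, show ⁅h, g⁆ * (g * h) = h * g by group, map_mul, map_mul]
      noncomm_ring
    rw [← this]
    exact hr (Submodule.mul_mem_mul (hg h) Submodule.mem_top)
  | add x y hx hy => simpa [add_mul, mul_add, add_sub_add_comm] using add_mem hx hy
  | smul c x hx => simpa [smul_sub, smul_mul_assoc, mul_smul_comm] using Submodule.smul_mem _ c hx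

lemma of_commutator_sub_one_mem (g h : G) :
    of k G ⁅g, h⁆ - 1 ∈ augmentationIdeal k G * augmentationIdeal k G := by
  set I := augmentationIdeal k G
  have : of k G ⁅g, h⁆ - 1 =
      ((of k G g - 1) * (of k G h - 1) - (of k G h - 1) * (of k G g - 1)) * of k G (h * g)⁻¹ := by
    have e : (of k G g - 1) * (of k G h - 1) - (of k G h - 1) * (of k G g - 1) =
        of k G (g * h) - of k G (h * g) := by rw [map_mul, map_mul]; noncomm_ring
    rw [e, sub_mul, ← map_mul, ← map_mul, mul_inv_cancel, map_one, commutatorElement_def]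
    simp only [mul_inv_rev, mul_assoc]
  rw [this]
  have hII : I * I * ⊤ ≤ I * I := by
    rw [mul_assoc]; exact mul_le_mul' le_rfl augmentationIdeal_mul_top_le
  refine hII (Submodule.mul_mem_mul (sub_mem ?_ ?_) Submodule.mem_top) <;>
    exact Submodule.mul_mem_mul (of_sub_one_mem_augmentationIdeal _)
      (of_sub_one_mem_augmentationIdeal _)

instance charP (p : ℕ) [CharP k p] : CharP (MonoidAlgebra k G) p :=
  charP_of_injective_algebraMap' k p

lemma of_sub_one_pow_char_pow (p : ℕ) [Fact p.Prime] [CharP k p] (g : G) (j : ℕ) :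
    (of k G g - 1) ^ p ^ j = of k G (g ^ p ^ j) - 1 := by
  rw [sub_pow_char_pow_of_commute _ _ (Commute.one_right _), one_pow, map_pow]

lemma pow_mul_le_of_commutator_mem (p : ℕ) [Fact p.Prime] [CharP k p]
    {I : Submodule k (MonoidAlgebra k G)} {g x : G}
    (hg : ∀ h : G, ⁅h, g⁆ ∈ Subgroup.normalClosure {x}) {j : ℕ}
    (hgp : g ^ p ^ j ∈ Subgroup.normalClosure {x}) {s : ℕ}
    (hs : I ^ s ≤ twoSidedSpan k {of k G x - 1} ⊔ twoSidedSpan k {of k G g - 1}) :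
    I ^ (s * p ^ j) ≤ twoSidedSpan k {of k G x - 1} := by
  have hl := top_mul_twoSidedSpan_le (k := k) {of k G x - 1}
  have hr := twoSidedSpan_mul_top_le (k := k) {of k G x - 1}
  have hN {y : G} (hy : y ∈ Subgroup.normalClosure {x}) :
      of k G y - 1 ∈ twoSidedSpan k {of k G x - 1} :=
    sub_one_mem_of_mem_normalClosure hl hr (by rintro _ rfl; exact subset_twoSidedSpan _ rfl) hy
  refine pow_mul_le_of_le_sup_twoSidedSpan hl hr
    (mul_sub_mul_mem_of_commutator_mem hr fun h => hN (hg h)) ?_ hs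
  rw [of_sub_one_pow_char_pow]
  exact hN hgp

end GroupAlgebra

section Commutator

variable {G : Type*} [Group G]

lemma commutator_mem_of_closure_eq_top {N : Subgroup G} [N.Normal] {s : Set G}
    (hs : Subgroup.closure s = ⊤) {g : G} (hsg : ∀ h ∈ s, ⁅h, g⁆ ∈ N) (h : G) : ⁅h, g⁆ ∈ N := by
  induction (hs ▸ Subgroup.mem_top h : h ∈ Subgroup.closure s) using Subgroup.closure_induction with
  | mem x hx => exact hsg x hx
  | one => simp
  | mul x y _ _ hx hy =>
    rw [show ⁅x * y, g⁆ = x * ⁅y, g⁆ * x⁻¹ * ⁅x, g⁆ by group]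
    exact mul_mem (Subgroup.Normal.conj_mem ‹_› _ hy x) hx
  | inv x _ hx =>
    rw [show ⁅x⁻¹, g⁆ = x⁻¹ * ⁅x, g⁆⁻¹ * x⁻¹⁻¹ by group]
    exact Subgroup.Normal.conj_mem ‹_› _ (inv_mem hx) x⁻¹

lemma commutatorElement_eq_conj (x y : G) : ⁅x, y⁆ = x * (y * (x⁻¹ * y * x)⁻¹) * x⁻¹ := by
  group

end Commutator

section H

variable (n m : ℕ)

lemma hc_eq : hc n m = (hb n m)⁻¹ * (ha n m)⁻¹ * hb n m * ha n m :=
  PresentedGroup.mk_eq_mk_of_inv_mul_mem (by simp [hrels])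

lemma ha_pow : ha n m ^ 2 ^ n = 1 :=
  PresentedGroup.one_of_mem (by simp [hrels])

lemma hb_pow : hb n m ^ 2 ^ m = 1 :=
  PresentedGroup.one_of_mem (by simp [hrels])

lemma hc_pow_four : hc n m ^ 4 = 1 :=
  PresentedGroup.one_of_mem (by simp [hrels])

lemma ha_inv_mul_hc_mul_ha : (ha n m)⁻¹ * hc n m * ha n m = (hc n m)⁻¹ :=
  PresentedGroup.mk_eq_mk_of_mul_inv_mem (by simp [hrels])

lemma hb_inv_mul_hc_mul_hb : (hb n m)⁻¹ * hc n m * hb n m = hc n m :=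
  PresentedGroup.mk_eq_mk_of_mul_inv_mem (by simp [hrels])

lemma closure_ha_hb : Subgroup.closure {ha n m, hb n m} = ⊤ := by
  rw [eq_top_iff, ← PresentedGroup.closure_range_of, Subgroup.closure_le]
  rintro _ ⟨i, rfl⟩
  have ha_mem : ha n m ∈ Subgroup.closure {ha n m, hb n m} := Subgroup.subset_closure (by simp)
  have hb_mem : hb n m ∈ Subgroup.closure {ha n m, hb n m} := Subgroup.subset_closure (by simp)
  fin_cases i
  · exact ha_mem
  · exact hb_mem
  · change hc n m ∈ _
    rw [hc_eq]
    exact mul_mem (mul_mem (mul_mem (inv_mem hb_mem) (inv_mem ha_mem)) hb_mem) ha_mem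

lemma commutator_ha_mem (h : HH n m) : ⁅h, ha n m⁆ ∈ Subgroup.normalClosure {hb n m} := by
  refine commutator_mem_of_closure_eq_top (closure_ha_hb n m) ?_ h
  have hb_mem := Subgroup.subset_normalClosure (Set.mem_singleton (hb n m))
  rintro _ (rfl | rfl)
  · rw [commutatorElement_self]; exact one_mem _
  · rw [show ⁅hb n m, ha n m⁆ = hb n m * (ha n m * (hb n m)⁻¹ * (ha n m)⁻¹) by group]
    exact mul_mem hb_mem (Subgroup.normalClosure_normal.conj_mem _ (inv_mem hb_mem) _)

lemma commutator_hb_mem (h : HH n m) : ⁅h, hb n m⁆ ∈ Subgroup.normalClosure {hc n m} := by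
  refine commutator_mem_of_closure_eq_top (closure_ha_hb n m) ?_ h
  have hc_mem := Subgroup.subset_normalClosure (Set.mem_singleton (hc n m))
  rintro _ (rfl | rfl)
  · rw [show ⁅ha n m, hb n m⁆ = ha n m * hb n m * (hc n m)⁻¹ * (ha n m * hb n m)⁻¹ by
      rw [hc_eq]; group]
    exact Subgroup.normalClosure_normal.conj_mem _ (inv_mem hc_mem) _
  · rw [commutatorElement_self]; exact one_mem _

lemma commutator_hc_mem (h : HH n m) : ⁅h, hc n m⁆ ∈ Subgroup.normalClosure {hc n m ^ 2} := by
  refine commutator_mem_of_closure_eq_top (closure_ha_hb n m) ?_ h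
  rintro _ (rfl | rfl) <;> rw [commutatorElement_eq_conj]
  · rw [ha_inv_mul_hc_mul_ha, inv_inv, ← sq]
    exact Subgroup.normalClosure_normal.conj_mem _
      (Subgroup.subset_normalClosure (Set.mem_singleton _)) _
  · rw [hb_inv_mul_hc_mul_hb, mul_inv_cancel, mul_one, mul_inv_cancel]
    exact one_mem _

lemma commutator_hc_sq_eq_one (h : HH n m) : ⁅h, hc n m ^ 2⁆ = 1 := by
  rw [← Subgroup.mem_bot]
  refine commutator_mem_of_closure_eq_top (closure_ha_hb n m) ?_ h
  have hc_sq_sq : hc n m ^ 2 * hc n m ^ 2 = 1 := by rw [← pow_add]; exact hc_pow_four n m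
  have hconj (x : HH n m) : x⁻¹ * hc n m ^ 2 * x = (x⁻¹ * hc n m * x) ^ 2 := by
    simp [sq, mul_assoc]
  rintro _ (rfl | rfl) <;> rw [Subgroup.mem_bot, commutatorElement_eq_conj, hconj]
  · rw [ha_inv_mul_hc_mul_ha, inv_pow, inv_inv, hc_sq_sq, mul_one, mul_inv_cancel]
  · rw [hb_inv_mul_hc_mul_hb, mul_inv_cancel, mul_one, mul_inv_cancel]

open MonoidAlgebra

lemma isNilpotent_augmentationIdeal : IsNilpotent (augmentationIdeal (ZMod 2) (HH n m)) := by
  set I := augmentationIdeal (ZMod 2) (HH n m)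
  let T (g : HH n m) : Submodule (ZMod 2) (kH n m) := twoSidedSpan (ZMod 2) {of _ _ g - 1}
  have hle_ab : I ^ 1 ≤ T (hb n m) ⊔ T (ha n m) := by
    rw [pow_one]
    refine augmentationIdeal_le_of_closure_eq_top ?_ ?_ (closure_ha_hb n m)
    · calc I * (T (hb n m) ⊔ T (ha n m)) ≤ ⊤ * T (hb n m) ⊔ ⊤ * T (ha n m) := by
            rw [← Submodule.mul_sup]; exact mul_le_mul' le_top le_rfl
        _ ≤ _ := sup_le_sup (top_mul_twoSidedSpan_le _) (top_mul_twoSidedSpan_le _)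
    · rintro _ (rfl | rfl)
      · exact Submodule.mem_sup_right (subset_twoSidedSpan _ rfl)
      · exact Submodule.mem_sup_left (subset_twoSidedSpan _ rfl)
  have hle_b : I ^ (1 * 2 ^ n) ≤ T (hb n m) :=
    pow_mul_le_of_commutator_mem 2 (commutator_ha_mem n m) (by rw [ha_pow]; exact one_mem _)
      hle_ab
  have hle_c : I ^ (1 * 2 ^ n * 2 ^ m) ≤ T (hc n m) :=
    pow_mul_le_of_commutator_mem 2 (commutator_hb_mem n m) (by rw [hb_pow]; exact one_mem _)
      (hle_b.trans le_sup_right)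
  have hle_c_sq : I ^ (1 * 2 ^ n * 2 ^ m * 2 ^ 1) ≤ T (hc n m ^ 2) :=
    pow_mul_le_of_commutator_mem 2 (commutator_hc_mem n m) (Subgroup.subset_normalClosure rfl)
      (hle_c.trans le_sup_right)
  have hle_one : I ^ (1 * 2 ^ n * 2 ^ m * 2 ^ 1 * 2 ^ 1) ≤ T 1 :=
    pow_mul_le_of_commutator_mem 2 (fun h => by rw [commutator_hc_sq_eq_one]; exact one_mem _)
      (by rw [← pow_mul, show 2 * 2 ^ 1 = 4 from rfl, hc_pow_four]; exact one_mem _)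
      (hle_c_sq.trans le_sup_right)
  refine ⟨_, le_bot_iff.1 (hle_one.trans_eq ?_)⟩
  simp only [T, twoSidedSpan, map_one, sub_self, Submodule.span_zero_singleton, Submodule.mul_bot,
    Submodule.bot_mul]

lemma yt_add_one_eq : yt n m + 1 = (e n m (hb n m) - 1) + e n m (hb n m) *
    ((e n m (hc n m) - 1) + (e n m (ha n m) - 1) * (e n m (hb n m) - 1) * e n m (hc n m)) := by
  set a := e n m (ha n m)
  set b := e n m (hb n m)
  set c := e n m (hc n m)
  calc yt n m + 1 = (b - 1) + b * ((c - 1) + (a - 1) * (b - 1) * c) +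
      2 * (b * a * c + b * b * c + 1 - b * c) := by
        simp only [yt, map_mul, a, b, c]; noncomm_ring
    _ = _ := by rw [show (2 : kH n m) = 0 from CharTwo.two_eq_zero, zero_mul, add_zero]

lemma yt_add_one_sub_mem : yt n m + 1 - (e n m (hb n m) - 1) ∈
    augmentationIdeal (ZMod 2) (HH n m) * augmentationIdeal (ZMod 2) (HH n m) := by
  set I := augmentationIdeal (ZMod 2) (HH n m)
  have hl : ⊤ * (I * I) ≤ I * I := by
    rw [← mul_assoc]; exact mul_le_mul' top_mul_augmentationIdeal_le le_rfl
  have hr : I * I * ⊤ ≤ I * I := by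
    rw [mul_assoc]; exact mul_le_mul' le_rfl augmentationIdeal_mul_top_le
  have hc_mem : e n m (hc n m) - 1 ∈ I * I := by
    rw [show hc n m = ⁅(hb n m)⁻¹, (ha n m)⁻¹⁆ by
      rw [commutatorElement_def, inv_inv, inv_inv, hc_eq]]
    exact of_commutator_sub_one_mem _ _
  rw [yt_add_one_eq, add_sub_cancel_left]
  refine hl (Submodule.mul_mem_mul Submodule.mem_top (add_mem hc_mem ?_))
  exact hr (Submodule.mul_mem_mul (Submodule.mul_mem_mul (of_sub_one_mem_augmentationIdeal _)
    (of_sub_one_mem_augmentationIdeal _)) Submodule.mem_top)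

lemma closure_subset_augmentationIdeal :
    (NonUnitalSubring.closure {e n m (ha n m) + 1, yt n m + 1} : Set (kH n m)) ⊆
      augmentationIdeal (ZMod 2) (HH n m) := by
  intro x hx
  induction hx using NonUnitalSubring.closure_induction with
  | mem x hx =>
    rcases hx with rfl | rfl
    · rw [← CharTwo.sub_eq_add]; exact of_sub_one_mem_augmentationIdeal _
    · rw [← sub_add_cancel (yt n m + 1) (e n m (hb n m) - 1)]
      exact add_mem (augmentationIdeal_mul_self_le (yt_add_one_sub_mem n m))
        (of_sub_one_mem_augmentationIdeal _)
  | zero => exact zero_mem _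
  | add _ _ _ _ hx hy => exact add_mem hx hy
  | neg _ _ hx => exact neg_mem hx
  | mul _ _ _ _ hx _ =>
    exact augmentationIdeal_mul_top_le (Submodule.mul_mem_mul hx Submodule.mem_top)

lemma augmentationIdeal_le_sup_mul_self : augmentationIdeal (ZMod 2) (HH n m) ≤
    AddSubgroup.toZModSubmodule 2
      (NonUnitalSubring.closure {e n m (ha n m) + 1, yt n m + 1}).toAddSubgroup ⊔
    augmentationIdeal (ZMod 2) (HH n m) * augmentationIdeal (ZMod 2) (HH n m) := by
  set S := NonUnitalSubring.closure {e n m (ha n m) + 1, yt n m + 1}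
  have hS : AddSubgroup.toZModSubmodule 2 S.toAddSubgroup ⊔
      augmentationIdeal (ZMod 2) (HH n m) * augmentationIdeal (ZMod 2) (HH n m) ≤
      augmentationIdeal (ZMod 2) (HH n m) :=
    sup_le (closure_subset_augmentationIdeal n m) augmentationIdeal_mul_self_le
  refine augmentationIdeal_le_of_closure_eq_top ((mul_le_mul' le_rfl hS).trans le_sup_right)
    ?_ (closure_ha_hb n m)
  rintro _ (rfl | rfl)
  · refine Submodule.mem_sup_left (NonUnitalSubring.subset_closure ?_)
    change e n m (ha n m) - 1 ∈ _
    rw [CharTwo.sub_eq_add]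
    exact Set.mem_insert _ _
  · change e n m (hb n m) - 1 ∈ _
    rw [← sub_sub_cancel (yt n m + 1) (e n m (hb n m) - 1)]
    exact sub_mem (Submodule.mem_sup_left (NonUnitalSubring.subset_closure (by simp)))
      (Submodule.mem_sup_right (yt_add_one_sub_mem n m))

end H

theorem statement_12_general (n m : ℕ) :
    (NonUnitalSubring.closure {e n m (ha n m) + 1, yt n m + 1} :
        Set (kH n m)) =
      (augIdeal n m : Set (kH n m)) := by
  set J := AddSubgroup.toZModSubmodule 2
    (NonUnitalSubring.closure {e n m (ha n m) + 1, yt n m + 1}).toAddSubgroup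
  have hJ : J * J ≤ J := Submodule.mul_le.2 fun _ hx _ hy => NonUnitalSubring.mul_mem _ hx hy
  have hJI : J ≤ augIdeal n m := closure_subset_augmentationIdeal n m
  exact congrArg SetLike.coe <| le_antisymm hJI <| le_of_le_sup_mul_self hJ hJI
    top_mul_augmentationIdeal_le (augmentationIdeal_le_sup_mul_self n m)
    (isNilpotent_augmentationIdeal n m)

/-- In the group algebra `kH` over the field with 2 elements, the
augmentation ideal `I` is generated as a (non-unital) ring by the two elements
`a + 1` and `ỹ + 1`, where `ỹ = b(a+b+ab)c`. -/
theorem statement_12 (n m : ℕ) (hm : 2 < m) (hmn : m < n) :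
    (NonUnitalSubring.closure {e n m (ha n m) + 1, yt n m + 1} :
        Set (kH n m)) =
      (augIdeal n m : Set (kH n m)) :=
  statement_12_general n m

end MIP
end
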